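/- arXiv:1610.07701 — 2 statements merged into one kernel-verified Lean document; each statement's English description precedes it below -/
import Mathlib

section
/- Let g : S1 × S2 → A be a two-person game form that is ±1-solvable: for every function u : A → {+1,-1} the zero-sum game with payoff u to player 1 and -u to player 2 has a saddle point. Then g is zero-sum solvable: for every u : A → ℝ the zero-sum game (u, -u) has a saddle point. -/
/-!
Write `f s1 s2 = u (g s1 s2)` and let `c` be the upper value `min_{s2} max_{s1} f`. If the
lower value `max_{s1} min_{s2} f` were smaller, the ±1-game paying `+1` exactly on the
outcomes with `u ≥ c` would have no saddle point: at a saddle point `(s1, s2)` either the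
payoff is `+1`, so row `s1` is `≥ c` everywhere and the lower value is `≥ c`, or it is `-1`,
so column `s2` is `< c` everywhere and the upper value is `< c`. So the upper value is at most
the lower value, and then a maximin row together with a minimax column is a saddle point.
-/

open Finset

namespace GameForm

variable {S1 S2 α β : Type*}

def IsSaddlePoint [LE α] (f : S1 → S2 → α) (s1 : S1) (s2 : S2) : Prop :=
  (∀ t1 : S1, f t1 s2 ≤ f s1 s2) ∧ (∀ t2 : S2, f s1 s2 ≤ f s1 t2)

theorem isSaddlePoint_comp_iff [LinearOrder α] [Preorder β] {φ : α → β} (hφ : StrictMono φ)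
    (f : S1 → S2 → α) (s1 : S1) (s2 : S2) :
    IsSaddlePoint (fun t1 t2 => φ (f t1 t2)) s1 s2 ↔ IsSaddlePoint f s1 s2 := by
  simp only [IsSaddlePoint, hφ.le_iff_le]

section Values

variable [Fintype S1] [Fintype S2] [Nonempty S1] [Nonempty S2] [LinearOrder α]

def lowerValue (f : S1 → S2 → α) : α :=
  univ.sup' univ_nonempty fun s1 => univ.inf' univ_nonempty fun s2 => f s1 s2

def upperValue (f : S1 → S2 → α) : α :=
  univ.inf' univ_nonempty fun s2 => univ.sup' univ_nonempty fun s1 => f s1 s2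

theorem exists_isSaddlePoint_of_upperValue_le_lowerValue {f : S1 → S2 → α}
    (h : upperValue f ≤ lowerValue f) : ∃ s1 s2, IsSaddlePoint f s1 s2 := by
  obtain ⟨s1, -, hs1⟩ := exists_mem_eq_sup' univ_nonempty
    fun s1 => univ.inf' univ_nonempty fun s2 => f s1 s2
  obtain ⟨s2, -, hs2⟩ := exists_mem_eq_inf' univ_nonempty
    fun s2 => univ.sup' univ_nonempty fun s1 => f s1 s2
  have hcol : ∀ t1, f t1 s2 ≤ lowerValue f := fun t1 =>
    calc f t1 s2 ≤ upperValue f := (le_sup' (fun t => f t s2) (mem_univ t1)).trans_eq hs2.symm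
      _ ≤ lowerValue f := h
  have hrow : ∀ t2, lowerValue f ≤ f s1 t2 := fun t2 =>
    hs1.trans_le (inf'_le _ (mem_univ t2))
  exact ⟨s1, s2, fun t1 => (hcol t1).trans (hrow s2), fun t2 => (hcol s1).trans (hrow t2)⟩

theorem le_lowerValue_or_upperValue_lt_of_isSaddlePoint_threshold {f : S1 → S2 → α} {c : α}
    {s1 : S1} {s2 : S2} (h : IsSaddlePoint (fun t1 t2 => decide (c ≤ f t1 t2)) s1 s2) :
    c ≤ lowerValue f ∨ upperValue f < c := by
  obtain ⟨hcol, hrow⟩ := h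
  simp only [Bool.le_iff_imp, decide_eq_true_eq] at hcol hrow
  by_cases hc : c ≤ f s1 s2
  · left
    calc c ≤ univ.inf' univ_nonempty (fun t2 => f s1 t2) :=
          le_inf' _ _ fun t2 _ => hrow t2 hc
      _ ≤ lowerValue f := le_sup' (fun t1 => univ.inf' univ_nonempty fun t2 => f t1 t2)
          (mem_univ s1)
  · right
    calc upperValue f ≤ univ.sup' univ_nonempty (fun t1 => f t1 s2) := inf'_le _ (mem_univ s2)
      _ < c := (sup'_lt_iff _).2 fun t1 _ => not_le.1 fun ht1 => hc (hcol t1 ht1)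

theorem upperValue_le_lowerValue_of_isSaddlePoint_threshold {f : S1 → S2 → α}
    {s1 : S1} {s2 : S2}
    (h : IsSaddlePoint (fun t1 t2 => decide (upperValue f ≤ f t1 t2)) s1 s2) :
    upperValue f ≤ lowerValue f :=
  (le_lowerValue_or_upperValue_lt_of_isSaddlePoint_threshold h).resolve_right (lt_irrefl _)

end Values

def boolToSign (b : Bool) : ℝ := if b then 1 else -1

theorem boolToSign_eq_one_or_eq_neg_one (b : Bool) : boolToSign b = 1 ∨ boolToSign b = -1 := by
  cases b <;> simp [boolToSign]

theorem strictMono_boolToSign : StrictMono boolToSign := by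
  rintro (_ | _) (_ | _) h <;> first | exact absurd h (by decide) | norm_num [boolToSign]

end GameForm

open GameForm in
theorem pm_one_solvable_implies_zero_sum_solvable_general
    {S1 S2 A : Type*} [Fintype S1] [Fintype S2]
    [Nonempty S1] [Nonempty S2]
    (g : S1 → S2 → A)
    (hPM : ∀ u : A → ℝ, (∀ a : A, u a = 1 ∨ u a = -1) →
      ∃ (s1 : S1) (s2 : S2),
        (∀ t1 : S1, u (g t1 s2) ≤ u (g s1 s2)) ∧
        (∀ t2 : S2, u (g s1 s2) ≤ u (g s1 t2))) :
    ∀ u : A → ℝ, ∃ (s1 : S1) (s2 : S2),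
      (∀ t1 : S1, u (g t1 s2) ≤ u (g s1 s2)) ∧
      (∀ t2 : S2, u (g s1 s2) ≤ u (g s1 t2)) := by
  intro u
  let f : S1 → S2 → ℝ := fun s1 s2 => u (g s1 s2)
  let sign : A → ℝ := fun a => boolToSign (decide (upperValue f ≤ u a))
  obtain ⟨s1, s2, hsign⟩ := hPM sign fun a => boolToSign_eq_one_or_eq_neg_one _
  have hthreshold : IsSaddlePoint (fun t1 t2 => decide (upperValue f ≤ f t1 t2)) s1 s2 :=
    (isSaddlePoint_comp_iff strictMono_boolToSign _ s1 s2).1 hsign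
  exact exists_isSaddlePoint_of_upperValue_le_lowerValue
    (upperValue_le_lowerValue_of_isSaddlePoint_threshold hthreshold)

/-- ±1-solvability of a two-person game form implies zero-sum solvability. -/
theorem pm_one_solvable_implies_zero_sum_solvable
    {S1 S2 A : Type*} [Fintype S1] [Fintype S2] [Fintype A]
    [Nonempty S1] [Nonempty S2]
    (g : S1 → S2 → A)
    (hPM : ∀ u : A → ℝ, (∀ a : A, u a = 1 ∨ u a = -1) →
      ∃ (s1 : S1) (s2 : S2),
        (∀ t1 : S1, u (g t1 s2) ≤ u (g s1 s2)) ∧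
        (∀ t2 : S2, u (g s1 s2) ≤ u (g s1 t2))) :
    ∀ u : A → ℝ, ∃ (s1 : S1) (s2 : S2),
      (∀ t1 : S1, u (g t1 s2) ≤ u (g s1 s2)) ∧
      (∀ t2 : S2, u (g s1 s2) ≤ u (g s1 t2)) :=
  pm_one_solvable_implies_zero_sum_solvable_general g hPM
end

section
/- Consider the three-person game of the paper's main example with outcome table g as in the 2×2×4 normal form, payoffs satisfying conditions (1)-(3) of Theorem 3, and a-priori-evaluation expected payoffs φ^i(α,β,γ,δ) = P(α,β,γ,δ;a1)·u_i(a1) + P(α,β,γ,δ;a2)·u_i(a2) + P(α,β,γ,δ;a3)·u_i(a3) + P(α,β,γ,δ;c)·u_i(c), where P(·;a1)=α(1-β), P(·;a2)=(αβ+(1-α)δ)(1-γ), P(·;a3)=(1-α+αβγ)(1-δ), P(·;c)=(1-α+αβ)γδ. Then for player 2, φ²(1,1,1,0) = u2(a3), and for all β,γ ∈ [0,1], φ²(1,β,γ,0) = (1-β)u2(a1) + β(1-γ)u2(a2) + βγ·u2(a3); consequently, if 0 < β < 1 and γ > 0 and u2(a3) > u2(a1) > u2(a2), then φ²(1,1,1,0)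 > φ²(1,β,γ,0). -/
/-- The final deviation argument of Theorem 3: with α = 1 and δ = 0, player 2's
a-priori expected payoff is a convex combination of u2(a1), u2(a2), u2(a3), and
deviating to (β,γ) = (1,1) strictly improves it. -/
theorem final_deviation (ua1 ua2 ua3 uc : ℝ)
    (h1 : ua3 > ua1) (h2 : ua1 > ua2) (h3 : ua2 > uc)
    (φ : ℝ → ℝ → ℝ → ℝ → ℝ)
    (hφ : ∀ α β γ δ : ℝ,
      φ α β γ δ = α * (1 - β) * ua1 +
        (α * β + (1 - α) * δ) * (1 - γ) * ua2 +
        (1 - α + α * β * γ) * (1 - δ) * ua3 +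
        (1 - α + α * β) * (γ * δ) * uc) :
    φ 1 1 1 0 = ua3 ∧
    (∀ β γ : ℝ, β ∈ Set.Icc (0:ℝ) 1 → γ ∈ Set.Icc (0:ℝ) 1 →
      φ 1 β γ 0 = (1 - β) * ua1 + β * (1 - γ) * ua2 + β * γ * ua3) ∧
    (∀ β γ : ℝ, 0 < β → β < 1 → 0 < γ → γ ≤ 1 →
      φ 1 1 1 0 > φ 1 β γ 0) := by
  refine ⟨by rw [hφ]; ring, fun β γ _ _ => by rw [hφ]; ring, fun β γ hb hb1 hg hg1 => ?_⟩
  rw [hφ, hφ]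
  nlinarith [mul_nonneg (mul_nonneg hb.le (sub_nonneg.mpr hg1)) (sub_pos.mpr h2).le, mul_pos (sub_pos.mpr hb1) (sub_pos.mpr h1), mul_pos hb hg]
end
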